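/- arXiv:2511.05917 — 2 statements merged into one kernel-verified Lean document; each statement's English description precedes it below -/
import Mathlib

section
/- Let n ≥ 2k ≥ 4 and 2 ≤ b ≤ k+1. The number of k-subsets S = {s_1 < ... < s_k} of [n] satisfying s_j ≤ j + 1 for all j ≤ b − 1 (i.e., S ⪯ [2,b], meaning the first b−1 elements of S are dominated coordinatewise by {2,3,...,b}) equals b·C(n−b, k−b+1) + C(n−b, k−b). -/
/-!
Since the elements of `S` are distinct positive integers, the constraint on the first `b - 1`
of them reduces to `s_{b-1} ≤ b`, i.e. to `S` meeting `[1, b]` in at least `b - 1` points.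
Splitting `S` into `S ∩ [1, b]` and `S ∩ (b, n]`, there are `b · C(n - b, k - b + 1)` such sets
meeting `[1, b]` in exactly `b - 1` points and `C(n - b, k - b)` containing `[1, b]`.
-/

/-- The `i`-th smallest element (0-indexed) of a finite set of naturals. -/
def nth (A : Finset ℕ) (i : ℕ) : ℕ := (Finset.sort A (· ≤ ·)).getD i 0

open Finset

theorem nth_eq_nat_nth (S : Finset ℕ) (i : ℕ) : nth S i = Nat.nth (· ∈ S) i := by
  rw [Nat.nth_eq_getD_sort (p := (· ∈ S)) S.finite_toSet]
  simp [nth]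

theorem nth_le_iff_lt_count {S : Finset ℕ} {i x : ℕ} (hi : i < #S) :
    nth S i ≤ x ↔ i < Nat.count (· ∈ S) (x + 1) := by
  rw [nth_eq_nat_nth]
  refine ⟨fun h => ?_, fun h => Nat.lt_succ_iff.1 (Nat.nth_lt_of_lt_count h)⟩
  have hcount := Nat.count_nth_succ (p := (· ∈ S)) (n := i) (fun _ => by simpa using hi)
  have hmono := Nat.count_monotone (· ∈ S) (Nat.add_le_add_right h 1)
  omega

theorem forall_nth_le_add_iff {S : Finset ℕ} {m : ℕ} (c : ℕ) (hm0 : 0 < m) (hm : m ≤ #S) :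
    (∀ j < m, nth S j ≤ j + c) ↔ m ≤ Nat.count (· ∈ S) (m + c) := by
  refine ⟨fun h => ?_, fun h j hj => ?_⟩
  · have hlast := (nth_le_iff_lt_count (by omega)).1 (h (m - 1) (by omega))
    rw [show m - 1 + c + 1 = m + c by omega] at hlast
    omega
  · rw [nth_le_iff_lt_count (by omega)]
    -- the count grows by at most one per step, so the bound at `m - 1` propagates down to `j`
    have hsplit := Nat.count_add (· ∈ S) (j + c + 1) (m - 1 - j)
    have hstep := Nat.count_le (fun k => j + c + 1 + k ∈ S) (n := m - 1 - j)
    rw [show j + c + 1 + (m - 1 - j) = m + c by omega] at hsplit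
    omega

theorem count_mem_eq_card_inter_Icc {S : Finset ℕ} (hS : 0 ∉ S) (x : ℕ) :
    Nat.count (· ∈ S) (x + 1) = #(S ∩ Icc 1 x) := by
  rw [Nat.count_eq_card_filter_range]
  congr 1
  ext y
  simp only [mem_filter, mem_range, mem_inter, mem_Icc]
  constructor
  · rintro ⟨hy, hyS⟩
    exact ⟨hyS, Nat.pos_of_ne_zero (by rintro rfl; exact hS hyS), by omega⟩
  · rintro ⟨hyS, -, hy⟩
    exact ⟨by omega, hyS⟩

theorem forall_nth_le_add_two_iff {S : Finset ℕ} (hS : 0 ∉ S) {b : ℕ} (hb : 2 ≤ b)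
    (hbS : b - 1 ≤ #S) :
    (∀ j < b - 1, nth S j ≤ j + 2) ↔ #(S ∩ Icc 1 b) = b - 1 ∨ #(S ∩ Icc 1 b) = b := by
  rw [forall_nth_le_add_iff 2 (by omega) hbS, show b - 1 + 2 = b + 1 by omega,
    count_mem_eq_card_inter_Icc hS]
  have : #(S ∩ Icc 1 b) ≤ b := (card_le_card inter_subset_right).trans_eq (by simp)
  omega

theorem card_filter_card_inter_eq {α : Type*} [DecidableEq α] {A B : Finset α}
    (hAB : Disjoint A B) (i j : ℕ) :
    #{S ∈ (A ∪ B).powersetCard (i + j) | #(S ∩ A) = i} = (#A).choose i * (#B).choose j := by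
  rw [← card_powersetCard, ← card_powersetCard, ← card_product]
  symm
  apply card_nbij' (fun p => p.1 ∪ p.2) (fun S => (S ∩ A, S ∩ B))
  · rintro ⟨T, U⟩ h
    simp only [coe_product, Set.mem_prod, mem_coe, mem_powersetCard] at h
    obtain ⟨⟨hTA, hT⟩, hUB, hU⟩ := h
    have hTU : (T ∪ U) ∩ A = T := by
      rw [union_inter_distrib_right, inter_eq_left.2 hTA,
        disjoint_iff_inter_eq_empty.1 (hAB.mono_right hUB).symm, union_empty]
    simp only [coe_filter, Set.mem_ofPred_eq, mem_powersetCard, hTU, hT, and_true]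
    exact ⟨union_subset_union hTA hUB,
      by rw [card_union_of_disjoint (hAB.mono hTA hUB), hT, hU]⟩
  · intro S h
    simp only [coe_filter, Set.mem_ofPred_eq, mem_powersetCard] at h
    obtain ⟨⟨hS, hcard⟩, hSA⟩ := h
    have hSB : #(S ∩ B) = j := by
      have := card_union_of_disjoint (hAB.mono inter_subset_right inter_subset_right)
        (s := S ∩ A) (t := S ∩ B)
      rw [← inter_union_distrib_left, inter_eq_left.2 hS] at this
      omega
    simp [hSA, hSB]
  · rintro ⟨T, U⟩ h
    simp only [coe_product, Set.mem_prod, mem_coe, mem_powersetCard] at h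
    obtain ⟨⟨hTA, -⟩, hUB, -⟩ := h
    simp only [union_inter_distrib_right, inter_eq_left.2 hTA, inter_eq_left.2 hUB,
      disjoint_iff_inter_eq_empty.1 (hAB.mono_right hUB).symm,
      disjoint_iff_inter_eq_empty.1 (hAB.mono_left hTA), union_empty, empty_union]
  · intro S h
    simp only [coe_filter, Set.mem_ofPred_eq, mem_powersetCard] at h
    dsimp only
    rw [← inter_union_distrib_left, inter_eq_left.2 h.1.1]

/-- Indices are 0-based: `nth S j ≤ j + 2` for `j < b - 1` is `s_j ≤ j + 1` for `j ≤ b - 1`.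
`C(n - b, k - b)` is written `C(n - b, n - k)`, which also vanishes when `b = k + 1`. -/
theorem stmt_12_general (n k b : ℕ) (hn : 2 * k ≤ n)
    (hb : 2 ≤ b) (hbk : b ≤ k + 1) :
    ((Finset.Icc 1 n).powerset.filter
      (fun S => S.card = k ∧ ∀ j < b - 1, nth S j ≤ j + 2)).card
    = b * Nat.choose (n - b) (k + 1 - b) + Nat.choose (n - b) (n - k) := by
  have hAB : Disjoint (Icc 1 b) (Ioc b n) := disjoint_left.2 fun x hxA hxB => by
    simp only [mem_Icc, mem_Ioc] at hxA hxB; omega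
  have hground : Icc 1 n = Icc 1 b ∪ Ioc b n := by
    rw [← coe_inj]; push_cast; exact (Set.Icc_union_Ioc_eq_Icc (by omega) (by omega)).symm
  have hsplit : (Icc 1 n).powerset.filter (fun S => #S = k ∧ ∀ j < b - 1, nth S j ≤ j + 2)
      = {S ∈ (Icc 1 b ∪ Ioc b n).powersetCard k |
          #(S ∩ Icc 1 b) = b - 1 ∨ #(S ∩ Icc 1 b) = b} := by
    rw [← hground, powersetCard_eq_filter, filter_filter]
    refine filter_congr fun S hS => and_congr_right fun hSk => ?_
    exact forall_nth_le_add_two_iff (fun h => by simpa using mem_powerset.1 hS h) hb (by omega)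
  rw [hsplit, filter_or, card_union_of_disjoint (disjoint_filter.2 fun _ _ h => by omega)]
  have hA : #(Icc 1 b) = b := by simp
  have hB : #(Ioc b n) = n - b := Nat.card_Ioc b n
  congr 1
  · have := card_filter_card_inter_eq hAB (b - 1) (k + 1 - b)
    rwa [show b - 1 + (k + 1 - b) = k by omega, hA, hB, Nat.choose_symm (by omega),
      Nat.choose_one_right] at this
  · rcases hbk.lt_or_eq with hbk | rfl
    · have := card_filter_card_inter_eq hAB b (k - b)
      rwa [show b + (k - b) = k by omega, hA, hB, Nat.choose_self, one_mul,
        Nat.choose_symm_of_eq_add (show n - b = k - b + (n - k) by omega)] at this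
    · rw [Nat.choose_eq_zero_of_lt (by omega), card_eq_zero, filter_eq_empty_iff]
      intro S hS hSA
      have := card_le_card (inter_subset_left (s₁ := S) (s₂ := Icc 1 (k + 1)))
      rw [(mem_powersetCard.1 hS).2] at this
      omega

/-- |F([2,b])| = b·C(n-b, k-b+1) + C(n-b, k-b): the number of k-subsets S of [n]
with s_j ≤ j+1 for all j ≤ b-1 (0-based: nth S j ≤ j+2 for j < b-1).
Here C(n-b, k-b) is written as C(n-b, n-k), which equals it by symmetry
(and is 0 when b = k+1, matching C(n-b, -1) = 0). -/
theorem stmt_12 (n k b : ℕ) (hn : 2 * k ≤ n) (hk : 2 ≤ k)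
    (hb : 2 ≤ b) (hbk : b ≤ k + 1) :
    ((Finset.Icc 1 n).powerset.filter
      (fun S => S.card = k ∧ ∀ j < b - 1, nth S j ≤ j + 2)).card
    = b * Nat.choose (n - b) (k + 1 - b) + Nat.choose (n - b) (n - k) :=
  stmt_12_general n k b hn hb hbk
end

section
/- Let n ≥ 2k ≥ 4, 4 ≤ b ≤ k+1, let A = F([2,b]) ∪ F({1,b}) ⊆ C([n],k), let S = {S ∈ C([n],k) : 1 ∈ S} be the star family, and let X ⊆ [2,b] with |X| = d ≥ 1. Then |A(X)| = |S(X)| + C(n−b, k−b+1), where A(X) = {A ∈ A : A ∩ X ≠ ∅} and S(X) = {S ∈ S : S ∩ X ≠ ∅}. -/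
section

variable {S : Finset ℕ} {i j x c m : ℕ}

lemma nth_eq_getElem (h : i < S.card) :
    nth S i = (S.sort (· ≤ ·))[i]'(by rwa [Finset.length_sort]) :=
  List.getD_eq_getElem _ 0 _

lemma nth_mem (h : i < S.card) : nth S i ∈ S := by
  rw [nth_eq_getElem h]
  exact (Finset.mem_sort _).1 (List.getElem_mem _)

lemma nth_lt_nth (hij : i < j) (hj : j < S.card) : nth S i < nth S j := by
  rw [nth_eq_getElem hj, nth_eq_getElem (hij.trans hj)]
  exact (Finset.sortedLT_sort S).getElem_lt_getElem_iff.2 hij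

lemma nth_le_nth (hij : i ≤ j) (hj : j < S.card) : nth S i ≤ nth S j := by
  rcases hij.eq_or_lt with rfl | hij
  · rfl
  · exact (nth_lt_nth hij hj).le

lemma exists_nth_eq (hx : x ∈ S) : ∃ i < S.card, nth S i = x := by
  obtain ⟨i, hi, rfl⟩ := List.getElem_of_mem ((Finset.mem_sort (· ≤ ·)).2 hx)
  rw [Finset.length_sort] at hi
  exact ⟨i, hi, nth_eq_getElem hi⟩

lemma nth_of_card_le (h : S.card ≤ i) : nth S i = 0 :=
  List.getD_eq_default _ 0 (by rwa [Finset.length_sort])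

lemma nth_zero_le (hx : x ∈ S) : nth S 0 ≤ x := by
  obtain ⟨i, hi, rfl⟩ := exists_nth_eq hx
  exact nth_le_nth i.zero_le hi

lemma nth_succ_le_of_mem (hx : x ∈ S) (hjx : nth S j < x) : nth S (j + 1) ≤ x := by
  obtain ⟨i, hi, rfl⟩ := exists_nth_eq hx
  rcases lt_or_ge (j + 1) S.card with hj | hj
  · have hji : j < i := by
      by_contra! hij
      exact (nth_le_nth hij (by omega)).not_gt hjx
    exact nth_le_nth hji hi
  · rw [nth_of_card_le hj]
    exact Nat.zero_le _

lemma add_le_nth (hc : ∀ x ∈ S, c ≤ x) (hj : j < S.card) : j + c ≤ nth S j := by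
  induction j with
  | zero => simpa using hc _ (nth_mem hj)
  | succ j ih =>
    have := nth_lt_nth (Nat.lt_add_one j) hj
    have := ih (by omega)
    omega

lemma nth_zero_eq_one_iff (h0 : 0 ∉ S) : nth S 0 = 1 ↔ 1 ∈ S := by
  rcases S.eq_empty_or_nonempty with rfl | hS
  · simp [nth]
  have hmem := nth_mem (Finset.card_pos.2 hS)
  refine ⟨fun h => h ▸ hmem, fun h1 => ?_⟩
  have := nth_zero_le h1
  have : nth S 0 ≠ 0 := fun h => h0 (h ▸ hmem)
  omega

lemma forall_nth_le_iff_Ico_subset (hc : ∀ x ∈ S, c ≤ x) (hm : m ≤ S.card) :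
    (∀ j < m, nth S j ≤ j + c) ↔ Finset.Ico c (c + m) ⊆ S := by
  constructor
  · intro h x hx
    rw [Finset.mem_Ico] at hx
    have hj : x - c < S.card := by omega
    have := h (x - c) (by omega)
    have := add_le_nth hc hj
    convert nth_mem hj
    omega
  · intro h j hj
    induction j with
    | zero => simpa using nth_zero_le (h (by simp; omega))
    | succ j ih =>
      refine nth_succ_le_of_mem (h (by simp; omega)) ?_
      have := ih (by omega)
      omega

end

lemma mem_family_inter_nonempty_iff {S X : Finset ℕ} {b : ℕ} (h0 : 0 ∉ S)
    (hbS : b - 1 ≤ S.card) (hX : X ⊆ Finset.Icc 2 b) (hX0 : X.Nonempty) :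
    ((∀ j < b - 1, nth S j ≤ j + 2) ∨ (nth S 0 = 1 ∧ nth S 1 ≤ b)) ∧ (S ∩ X).Nonempty ↔
      (1 ∈ S ∧ (S ∩ X).Nonempty) ∨ (1 ∉ S ∧ Finset.Icc 2 b ⊆ S) := by
  by_cases h1 : 1 ∈ S
  · have hS0 := (nth_zero_eq_one_iff h0).2 h1
    simp only [h1, not_true_eq_false, false_and, or_false, true_and, hS0, and_iff_right_iff_imp]
    rintro ⟨x, hx⟩
    obtain ⟨hxS, hxX⟩ := Finset.mem_inter.1 hx
    have hxb := Finset.mem_Icc.1 (hX hxX)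
    exact Or.inr ((nth_succ_le_of_mem hxS (by omega)).trans hxb.2)
  · have h2 : ∀ x ∈ S, 2 ≤ x := fun x hx => by
      have : x ≠ 0 := fun h => h0 (h ▸ hx)
      have : x ≠ 1 := fun h => h1 (h ▸ hx)
      omega
    have hIco : Finset.Ico 2 (2 + (b - 1)) = Finset.Icc 2 b := by
      obtain ⟨x, hx⟩ := hX0
      have := Finset.mem_Icc.1 (hX hx)
      ext; simp only [Finset.mem_Ico, Finset.mem_Icc]; omega
    simp only [h1, false_and, false_or, not_false_eq_true, true_and, nth_zero_eq_one_iff h0,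
      forall_nth_le_iff_Ico_subset h2 hbS, hIco, or_false, and_iff_left_iff_imp]
    obtain ⟨x, hx⟩ := hX0
    exact fun hsub => ⟨x, Finset.mem_inter.2 ⟨hsub (hX hx), hx⟩⟩

lemma card_filter_one_notMem_Icc_two_subset {n k b : ℕ} (hb : 1 ≤ b) (hbn : b ≤ n)
    (hbk : b ≤ k + 1) :
    ((Finset.Icc 1 n).powerset.filter
      (fun S => S.card = k ∧ 1 ∉ S ∧ Finset.Icc 2 b ⊆ S)).card = (n - b).choose (k + 1 - b) := by
  have hIcc : Finset.Icc 2 b ⊆ Finset.Ioc 1 n := fun x hx => by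
    simp only [Finset.mem_Icc, Finset.mem_Ioc] at hx ⊢
    omega
  have hfilter : (Finset.Icc 1 n).powerset.filter
      (fun S => S.card = k ∧ 1 ∉ S ∧ Finset.Icc 2 b ⊆ S) =
      ((Finset.Ioc 1 n).powersetCard k).filter (Finset.Icc 2 b ⊆ ·) := by
    ext S
    simp only [Finset.mem_filter, Finset.mem_powerset, Finset.mem_powersetCard,
      ← Finset.Icc_erase_left, Finset.subset_erase]
    tauto
  rw [hfilter, Finset.card_filter_powersetCard_subset _ _ _ hIcc (by simp; omega),
    Nat.card_Icc, Nat.card_Ioc]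
  congr 1 <;> omega

theorem stmt_18_general (n k b d : ℕ) (hn : 2 * k ≤ n)
    (hbk : b ≤ k + 1)
    (X : Finset ℕ) (hX : X ⊆ Finset.Icc 2 b) (hXd : X.card = d) (hd : 1 ≤ d) :
    ((Finset.Icc 1 n).powerset.filter
      (fun S => S.card = k ∧
        ((∀ j < b - 1, nth S j ≤ j + 2) ∨ (nth S 0 = 1 ∧ nth S 1 ≤ b)) ∧
        (S ∩ X).Nonempty)).card
    = ((Finset.Icc 1 n).powerset.filter
        (fun S => S.card = k ∧ 1 ∈ S ∧ (S ∩ X).Nonempty)).card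
      + Nat.choose (n - b) (k + 1 - b) := by
  have hX0 : X.Nonempty := Finset.card_pos.1 (by omega)
  have h2b : 2 ≤ b := by
    obtain ⟨x, hx⟩ := hX0
    exact (Finset.mem_Icc.1 (hX hx)).1.trans (Finset.mem_Icc.1 (hX hx)).2
  have hsplit : ∀ S ∈ (Finset.Icc 1 n).powerset,
      (S.card = k ∧ ((∀ j < b - 1, nth S j ≤ j + 2) ∨ (nth S 0 = 1 ∧ nth S 1 ≤ b)) ∧
        (S ∩ X).Nonempty) ↔
      (S.card = k ∧ 1 ∈ S ∧ (S ∩ X).Nonempty) ∨ (S.card = k ∧ 1 ∉ S ∧ Finset.Icc 2 b ⊆ S) := by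
    intro S hS
    have h0 : 0 ∉ S := fun h => by simpa using Finset.mem_powerset.1 hS h
    by_cases hk : S.card = k
    · simp only [hk, true_and, mem_family_inter_nonempty_iff h0 (by omega) hX hX0]
    · simp only [hk, false_and, or_self]
  have hdisj : Disjoint
      ((Finset.Icc 1 n).powerset.filter (fun S => S.card = k ∧ 1 ∈ S ∧ (S ∩ X).Nonempty))
      ((Finset.Icc 1 n).powerset.filter (fun S => S.card = k ∧ 1 ∉ S ∧ Finset.Icc 2 b ⊆ S)) :=
    Finset.disjoint_filter.2 fun _ _ hS hS' => hS'.2.1 hS.2.1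
  rw [Finset.filter_congr hsplit, Finset.filter_or, Finset.card_union_of_disjoint hdisj,
    card_filter_one_notMem_Icc_two_subset (by omega) (by omega) hbk]

/-- For X ⊆ [2,b] with |X| = d ≥ 1, |A(X)| = |S(X)| + C(n-b, k-b+1), where
A = F([2,b]) ∪ F(1,b) and S is the star family. -/
theorem stmt_18 (n k b d : ℕ) (hn : 2 * k ≤ n) (hk : 2 ≤ k)
    (hb : 4 ≤ b) (hbk : b ≤ k + 1)
    (X : Finset ℕ) (hX : X ⊆ Finset.Icc 2 b) (hXd : X.card = d) (hd : 1 ≤ d) :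
    ((Finset.Icc 1 n).powerset.filter
      (fun S => S.card = k ∧
        ((∀ j < b - 1, nth S j ≤ j + 2) ∨ (nth S 0 = 1 ∧ nth S 1 ≤ b)) ∧
        (S ∩ X).Nonempty)).card
    = ((Finset.Icc 1 n).powerset.filter
        (fun S => S.card = k ∧ 1 ∈ S ∧ (S ∩ X).Nonempty)).card
      + Nat.choose (n - b) (k + 1 - b) :=
  stmt_18_general n k b d hn hbk X hX hXd hd
end
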